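/- A subset A of a topological space X is e*-regular if and only if A is both e*-θ-open and e*-θ-closed. -/

import Mathlib

open Set Topology

variable {X : Type*} [TopologicalSpace X]

/-- δ-closure of A. -/
def deltaCl (A : Set X) : Set X :=
  {x | ∀ U : Set X, IsOpen U → x ∈ U → (interior (closure U) ∩ A).Nonempty}

/-- A is e*-open if A ⊆ cl(int(δ-cl A)). -/
def EStarOpen (A : Set X) : Prop := A ⊆ closure (interior (deltaCl A))

/-- A is e*-closed if its complement is e*-open. -/
def EStarClosed (A : Set X) : Prop := EStarOpen Aᶜ

/-- e*-closure: intersection of all e*-closed supersets. -/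
def eStarCl (A : Set X) : Set X := ⋂₀ {F | EStarClosed F ∧ A ⊆ F}

/-- e*-interior: union of all e*-open subsets. -/
def eStarInt (A : Set X) : Set X := ⋃₀ {U | EStarOpen U ∧ U ⊆ A}

/-- e*-regular: both e*-open and e*-closed. -/
def EStarRegular (A : Set X) : Prop := EStarOpen A ∧ EStarClosed A

/-- e*-θ-closure. -/
def eStarClTheta (A : Set X) : Set X :=
  {x | ∀ U : Set X, EStarOpen U → x ∈ U → (eStarCl U ∩ A).Nonempty}

/-- e*-θ-closed. -/
def EStarThetaClosed (A : Set X) : Prop := A = eStarClTheta A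

/-- e*-θ-open. -/
def EStarThetaOpen (A : Set X) : Prop := EStarThetaClosed Aᶜ

/-- quasi e*-θ-closed. -/
def QEStarThetaClosed (A : Set X) : Prop :=
  ∀ U : Set X, EStarThetaOpen U → A ⊆ U → eStarClTheta A ⊆ U

/-- e*-θ-kernel. -/
def eStarKerTheta (A : Set X) : Set X := ⋂₀ {U | EStarThetaOpen U ∧ A ⊆ U}

lemma deltaCl_mono {A B : Set X} (h : A ⊆ B) : deltaCl A ⊆ deltaCl B :=
  fun _ hx U hU hxU => (hx U hU hxU).mono (inter_subset_inter_right _ h)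

lemma eStarOpen_sUnion {S : Set (Set X)} (h : ∀ s ∈ S, EStarOpen s) : EStarOpen (⋃₀ S) := by
  rintro x ⟨s, hs, hxs⟩
  exact closure_mono (interior_mono (deltaCl_mono (subset_sUnion_of_mem hs))) (h s hs hxs)

lemma eStarClosed_compl_iff {A : Set X} : EStarClosed Aᶜ ↔ EStarOpen A := by
  rw [EStarClosed, compl_compl]

lemma subset_eStarCl (A : Set X) : A ⊆ eStarCl A := fun _ hx _ hF => hF.2 hx

lemma eStarCl_subset {A F : Set X} (hF : EStarClosed F) (hAF : A ⊆ F) : eStarCl A ⊆ F :=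
  sInter_subset_of_mem ⟨hF, hAF⟩

lemma eStarClosed_eStarCl (A : Set X) : EStarClosed (eStarCl A) := by
  rw [EStarClosed, eStarCl, compl_sInter]
  refine eStarOpen_sUnion ?_
  rintro _ ⟨F, ⟨hF, -⟩, rfl⟩
  exact hF

lemma subset_eStarClTheta (A : Set X) : A ⊆ eStarClTheta A :=
  fun x hx _ _ hxU => ⟨x, subset_eStarCl _ hxU, hx⟩

lemma eStarCl_subset_eStarClTheta (A : Set X) : eStarCl A ⊆ eStarClTheta A := by
  intro x hx U hU hxU
  by_contra hdisj
  have hAU : A ⊆ Uᶜ := fun y hyA hyU => hdisj ⟨y, subset_eStarCl U hyU, hyA⟩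
  exact eStarCl_subset (eStarClosed_compl_iff.2 hU) hAU hx hxU

lemma EStarRegular.compl {A : Set X} (h : EStarRegular A) : EStarRegular Aᶜ :=
  ⟨h.2, eStarClosed_compl_iff.2 h.1⟩

-- A point outside `A` is separated from `A` by the e*-open set `Aᶜ`, which is its own e*-closure.
lemma EStarRegular.eStarThetaClosed {A : Set X} (h : EStarRegular A) : EStarThetaClosed A := by
  refine (subset_eStarClTheta A).antisymm fun x hx => ?_
  by_contra hxA
  obtain ⟨y, hyCl, hyA⟩ := hx Aᶜ h.2 hxA
  exact eStarCl_subset h.compl.2 subset_rfl hyCl hyA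

lemma EStarThetaClosed.eStarClosed {A : Set X} (h : EStarThetaClosed A) : EStarClosed A := by
  have hcl : eStarCl A = A :=
    (h.symm ▸ eStarCl_subset_eStarClTheta A).antisymm (subset_eStarCl A)
  exact hcl ▸ eStarClosed_eStarCl A

theorem stmt3 (A : Set X) : EStarRegular A ↔ EStarThetaOpen A ∧ EStarThetaClosed A := by
  refine ⟨fun h => ⟨h.compl.eStarThetaClosed, h.eStarThetaClosed⟩, fun ⟨hOpen, hClosed⟩ => ?_⟩
  exact ⟨eStarClosed_compl_iff.1 hOpen.eStarClosed, hClosed.eStarClosed⟩
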